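/- For δ > 0, p(r) = α/(r²+δ) with α = 1/log((1+δ)/δ), the Gaussian curvature K = -(1/(2p))Δ(log p) of the conformal metric p ds² equals K(r) = (2δ/(r²+δ))·log((1+δ)/δ), which is strictly positive on the unit disc. -/
import Mathlib


open Real Set

/-- For δ > 0, p(r) = α/(r²+δ) with α = 1/log((1+δ)/δ), the Gaussian
    curvature K = -(1/(2p)) Δ(log p) of the conformal metric p ds², computed for the
    radially symmetric function log p via the radial Laplacian Δf = f'' + f'/r, equals
    K(r) = (2δ/(r²+δ))·log((1+δ)/δ), which is strictly positive on the unit disc. -/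
theorem gaussian_curvature_formula (δ : ℝ) (hδ : 0 < δ) :
    (∀ r ∈ Set.Ioo (0:ℝ) 1,
      -(1 / (2 * ((1 / Real.log ((1 + δ) / δ)) / (r ^ 2 + δ)))) *
          (deriv (deriv (fun s : ℝ => Real.log ((1 / Real.log ((1 + δ) / δ)) / (s ^ 2 + δ)))) r
            + deriv (fun s : ℝ => Real.log ((1 / Real.log ((1 + δ) / δ)) / (s ^ 2 + δ))) r / r)
        = (2 * δ / (r ^ 2 + δ)) * Real.log ((1 + δ) / δ)) ∧
    (∀ r ∈ Set.Icc (0:ℝ) 1, 0 < (2 * δ / (r ^ 2 + δ)) * Real.log ((1 + δ) / δ)) := by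
  have hq : 1 < (1 + δ) / δ := by
    rw [lt_div_iff₀ hδ]; linarith
  have hL : 0 < Real.log ((1 + δ) / δ) := Real.log_pos hq
  set L := Real.log ((1 + δ) / δ) with hLdef
  have hd1 : ∀ s : ℝ, deriv (fun s : ℝ => Real.log ((1 / L) / (s ^ 2 + δ))) s
      = -(2 * s / (s ^ 2 + δ)) := by
    intro s
    have hs : (0:ℝ) < s ^ 2 + δ := by positivity
    have hfun : (fun s : ℝ => Real.log ((1 / L) / (s ^ 2 + δ)))
        = fun s : ℝ => Real.log (1 / L) - Real.log (s ^ 2 + δ) := by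
      funext t
      have ht : (0:ℝ) < t ^ 2 + δ := by positivity
      rw [Real.log_div (by positivity) ht.ne']
    rw [hfun]
    have h1 : HasDerivAt (fun s : ℝ => s ^ 2 + δ) (2 * s) s := by
      simpa using (hasDerivAt_pow 2 s).add_const δ
    have h2 : HasDerivAt (fun s : ℝ => Real.log (1 / L) - Real.log (s ^ 2 + δ))
        (0 - 2 * s / (s ^ 2 + δ)) s :=
      (hasDerivAt_const s _).sub (h1.log hs.ne')
    rw [h2.deriv]; ring
  have hd2 : ∀ s : ℝ,
      deriv (deriv (fun s : ℝ => Real.log ((1 / L) / (s ^ 2 + δ)))) s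
      = -((2 * (s ^ 2 + δ) - 2 * s * (2 * s)) / (s ^ 2 + δ) ^ 2) := by
    intro s
    have hs : (0:ℝ) < s ^ 2 + δ := by positivity
    have h0 : deriv (fun s : ℝ => Real.log ((1 / L) / (s ^ 2 + δ)))
        = fun s : ℝ => -(2 * s / (s ^ 2 + δ)) := funext hd1
    rw [h0]
    have h1 : HasDerivAt (fun s : ℝ => s ^ 2 + δ) (2 * s) s := by
      simpa using (hasDerivAt_pow 2 s).add_const δ
    have h2 : HasDerivAt (fun s : ℝ => 2 * s) 2 s := by
      simpa using (hasDerivAt_id s).const_mul (2:ℝ)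
    have h3 : HasDerivAt (fun s : ℝ => 2 * s / (s ^ 2 + δ))
        ((2 * (s ^ 2 + δ) - 2 * s * (2 * s)) / (s ^ 2 + δ) ^ 2) s :=
      h2.div h1 hs.ne'
    exact h3.neg.deriv
  constructor
  · rintro r ⟨hr0, hr1⟩
    have hs : (0:ℝ) < r ^ 2 + δ := by positivity
    rw [hd1 r, hd2 r]
    field_simp
    ring
  · rintro r ⟨hr0, hr1⟩
    have hs : (0:ℝ) < r ^ 2 + δ := by positivity
    positivity
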